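/- arXiv:1009.0789 — 5 statements merged into one kernel-verified Lean document; each statement's English description precedes it below -/
import Mathlib

section
/- The first Brocard triangle A₁B₁C₁ of a triangle ABC is similar to ABC: the angle of A₁B₁C₁ at A₁ equals the angle of ABC at A, the angle at B₁ equals the angle at B, and the angle at C₁ equals the angle at C. -/
/-!
The perpendicular bisectors all pass through `O`, so `A₁`, `B₁`, `C₁`, the feet of the
perpendiculars from `K` to them, lie on the circle with diameter `OK`. The chord `A₁B₁` subtends at
`O` the angle between the bisectors of `BC` and `CA`, which is `∠C` or its supplement, hence
`A₁B₁ = OK · sin C`, and by the law of sines `A₁B₁ : AB = OK : 2R` for each side. Algebraically,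
`A₁B₁² · BC² · CA² = OK² · Γ`, where `Γ = 4 · area(ABC)²` is the Gram determinant of any two side
vectors.
-/

open EuclideanGeometry Real Affine
open scoped RealInnerProductSpace

noncomputable section

abbrev Pt := EuclideanSpace ℝ (Fin 2)

open Module AffineSubspace

namespace InnerProductGeometry

variable {V : Type*} [NormedAddCommGroup V] [InnerProductSpace ℝ V]

def gramDet (u v : V) : ℝ := ‖u‖ ^ 2 * ‖v‖ ^ 2 - ⟪u, v⟫ ^ 2

theorem gramDet_eq_of_add_add_eq_zero {u v w : V} (h : u + v + w = 0) :
    gramDet u v = gramDet v w := by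
  obtain rfl : w = -(u + v) := eq_neg_of_add_eq_zero_right h
  have := norm_add_sq_real u v
  simp only [gramDet, norm_neg, inner_neg_right, inner_add_right, real_inner_self_eq_norm_sq,
    real_inner_comm u v]
  linear_combination (-‖v‖ ^ 2) * this

theorem gramDet_eq_sq_sin_angle_mul (u v : V) :
    gramDet u v = (sin (angle u v) * (‖u‖ * ‖v‖)) ^ 2 := by
  rw [sin_angle_mul_norm_mul_norm, sq_sqrt (by nlinarith [real_inner_mul_inner_self_le u v])]
  simp only [gramDet, real_inner_self_eq_norm_sq]
  ring

/-- In a plane the Gram determinant of `k`, `u`, `v` vanishes; this is its expansion along `k`. -/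
theorem sq_norm_mul_gramDet_of_finrank_eq_two (h : finrank ℝ V = 2) (k u v : V) :
    ‖k‖ ^ 2 * gramDet u v
      = ⟪k, u⟫ ^ 2 * ‖v‖ ^ 2 + ⟪k, v⟫ ^ 2 * ‖u‖ ^ 2 - 2 * ⟪k, u⟫ * ⟪k, v⟫ * ⟪u, v⟫ := by
  have : FiniteDimensional ℝ V := Module.finite_of_finrank_pos (by omega)
  let e := ((stdOrthonormalBasis ℝ V).reindex (finCongr h)).repr
  simp only [gramDet, ← e.norm_map, ← e.inner_map_map, EuclideanSpace.norm_sq_eq,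
    EuclideanSpace.inner_eq_star_dotProduct, dotProduct, Fin.sum_univ_two, Real.norm_eq_abs,
    sq_abs, star_trivial]
  ring

theorem sq_norm_sub_mul_eq_sq_norm_mul_gramDet (h : finrank ℝ V = 2) {k a b u v : V}
    (ha : ⟪a, u⟫ = 0) (hka : ∃ s : ℝ, k - a = s • u)
    (hb : ⟪b, v⟫ = 0) (hkb : ∃ t : ℝ, k - b = t • v) :
    ‖a - b‖ ^ 2 * (‖u‖ ^ 2 * ‖v‖ ^ 2) = ‖k‖ ^ 2 * gramDet u v := by
  obtain ⟨s, hs⟩ := hka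
  obtain ⟨t, ht⟩ := hkb
  have hab : a - b = t • v - s • u := by rw [← hs, ← ht]; abel
  have hku : ⟪k, u⟫ = s * ‖u‖ ^ 2 := by
    rw [← sub_add_cancel k a, hs, inner_add_left, ha, real_inner_smul_left,
      real_inner_self_eq_norm_sq, add_zero]
  have hkv : ⟪k, v⟫ = t * ‖v‖ ^ 2 := by
    rw [← sub_add_cancel k b, ht, inner_add_left, hb, real_inner_smul_left,
      real_inner_self_eq_norm_sq, add_zero]
  rw [sq_norm_mul_gramDet_of_finrank_eq_two h, hab, hku, hkv, norm_sub_sq_real,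
    norm_smul, norm_smul, real_inner_smul_left, real_inner_smul_right, mul_pow, mul_pow,
    Real.norm_eq_abs, Real.norm_eq_abs, sq_abs, sq_abs, real_inner_comm v u]
  ring

end InnerProductGeometry

namespace EuclideanGeometry

open InnerProductGeometry

variable {V P : Type*} [NormedAddCommGroup V] [InnerProductSpace ℝ V] [MetricSpace P]
  [NormedAddTorsor V P]

theorem inner_vsub_vsub_eq_zero_of_mem_perpBisector {p₁ p₂ x y : P}
    (hx : x ∈ perpBisector p₁ p₂) (hy : y ∈ perpBisector p₁ p₂) : ⟪x -ᵥ y, p₁ -ᵥ p₂⟫ = 0 := by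
  have hxy := vsub_mem_direction hx hy
  rw [direction_perpBisector, Submodule.mem_orthogonal_singleton_iff_inner_right] at hxy
  rw [← neg_vsub_eq_vsub_rev p₂ p₁, inner_neg_right, real_inner_comm, hxy, neg_zero]

theorem gramDet_ne_zero_of_not_collinear {p₁ p₂ p₃ : P} (h : ¬Collinear ℝ {p₁, p₂, p₃}) :
    gramDet (p₁ -ᵥ p₂) (p₂ -ᵥ p₃) ≠ 0 := by
  have h₁₂ := vsub_ne_zero.mpr (ne₁₂_of_not_collinear h)
  have h₃₂ := vsub_ne_zero.mpr (ne₂₃_of_not_collinear h).symm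
  rw [← neg_vsub_eq_vsub_rev p₃ p₂, gramDet, norm_neg, inner_neg_right, neg_sq, ← gramDet,
    gramDet_eq_sq_sin_angle_mul]
  exact pow_ne_zero 2 (mul_ne_zero (sin_ne_zero_of_not_collinear h)
    (mul_ne_zero (norm_ne_zero_iff.mpr h₁₂) (norm_ne_zero_iff.mpr h₃₂)))

theorem dist_sq_mul_eq_of_mem_perpBisector (h : finrank ℝ V = 2) {p₁ p₂ q₁ q₂ O K X Y : P}
    (hOp : O ∈ perpBisector p₁ p₂) (hOq : O ∈ perpBisector q₁ q₂)
    (hX : X ∈ perpBisector p₁ p₂) (hKX : ∃ s : ℝ, K -ᵥ X = s • (p₁ -ᵥ p₂))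
    (hY : Y ∈ perpBisector q₁ q₂) (hKY : ∃ t : ℝ, K -ᵥ Y = t • (q₁ -ᵥ q₂)) :
    dist X Y ^ 2 * (dist p₁ p₂ ^ 2 * dist q₁ q₂ ^ 2)
      = dist K O ^ 2 * gramDet (p₁ -ᵥ p₂) (q₁ -ᵥ q₂) := by
  simp only [dist_eq_norm_vsub V, ← vsub_sub_vsub_cancel_right X Y O]
  refine sq_norm_sub_mul_eq_sq_norm_mul_gramDet h
    (inner_vsub_vsub_eq_zero_of_mem_perpBisector hX hOp) ?_
    (inner_vsub_vsub_eq_zero_of_mem_perpBisector hY hOq) ?_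
  · simpa only [vsub_sub_vsub_cancel_right] using hKX
  · simpa only [vsub_sub_vsub_cancel_right] using hKY

theorem similar_of_mem_perpBisector_of_vsub_eq_smul (h : finrank ℝ V = 2) {A B C O K A₁ B₁ C₁ : P}
    (hABC : ¬Collinear ℝ {A, B, C}) (hOAB : dist O A = dist O B) (hOBC : dist O B = dist O C)
    (hA₁ : A₁ ∈ perpBisector B C) (hA₁p : ∃ t : ℝ, K -ᵥ A₁ = t • (B -ᵥ C))
    (hB₁ : B₁ ∈ perpBisector C A) (hB₁p : ∃ t : ℝ, K -ᵥ B₁ = t • (C -ᵥ A))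
    (hC₁ : C₁ ∈ perpBisector A B) (hC₁p : ∃ t : ℝ, K -ᵥ C₁ = t • (A -ᵥ B)) (hKO : K ≠ O) :
    Similar ![A₁, B₁, C₁] ![A, B, C] := by
  have hOA : O ∈ perpBisector B C := mem_perpBisector_iff_dist_eq.mpr hOBC
  have hOB : O ∈ perpBisector C A := mem_perpBisector_iff_dist_eq.mpr (hOAB.trans hOBC).symm
  have hOC : O ∈ perpBisector A B := mem_perpBisector_iff_dist_eq.mpr hOAB
  set G := gramDet (B -ᵥ C) (C -ᵥ A)
  have hG : G ≠ 0 :=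
    gramDet_ne_zero_of_not_collinear (by rwa [Set.insert_comm, Set.pair_comm] at hABC)
  have hGB : gramDet (C -ᵥ A) (A -ᵥ B) = G :=
    (gramDet_eq_of_add_add_eq_zero (by simp)).symm
  have hGC : gramDet (A -ᵥ B) (B -ᵥ C) = G :=
    (gramDet_eq_of_add_add_eq_zero (by simp)).symm.trans hGB
  have hAB := dist_sq_mul_eq_of_mem_perpBisector h hOA hOB hA₁ hA₁p hB₁ hB₁p
  have hBC := dist_sq_mul_eq_of_mem_perpBisector h hOB hOC hB₁ hB₁p hC₁ hC₁p
  have hCA := dist_sq_mul_eq_of_mem_perpBisector h hOC hOA hC₁ hC₁p hA₁ hA₁p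
  rw [hGB] at hBC
  rw [hGC] at hCA
  have hKOG : dist K O ^ 2 * G ≠ 0 := mul_ne_zero (pow_ne_zero 2 (dist_ne_zero.mpr hKO)) hG
  have ha : dist B C ≠ 0 := dist_ne_zero.mpr (ne₂₃_of_not_collinear hABC)
  have hb : dist C A ≠ 0 := dist_ne_zero.mpr (ne₁₃_of_not_collinear hABC).symm
  have hc : dist A B ≠ 0 := dist_ne_zero.mpr (ne₁₂_of_not_collinear hABC)
  refine similar_of_dist_mul_eq_dist_mul_eq (fun h₀ ↦ hKOG ?_) hc ?_ ?_
  · rw [← hAB, h₀]; ring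
  · refine (sq_eq_sq₀ (by positivity) (by positivity)).mp
      (mul_right_cancel₀ (pow_ne_zero 2 hb) ?_)
    linear_combination hAB - hBC
  · refine (sq_eq_sq₀ (by positivity) (by positivity)).mp
      (mul_right_cancel₀ (pow_ne_zero 2 ha) ?_)
    linear_combination hAB - hCA

end EuclideanGeometry

theorem stmt_11_general (A B C O K A₁ B₁ C₁ : Pt)
    (hABC : AffineIndependent ℝ ![A, B, C])
    (hA₁ : A₁ ∈ AffineSubspace.perpBisector B C) (hA₁p : ∃ t : ℝ, K -ᵥ A₁ = t • (B -ᵥ C))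
    (hB₁ : B₁ ∈ AffineSubspace.perpBisector C A) (hB₁p : ∃ t : ℝ, K -ᵥ B₁ = t • (C -ᵥ A))
    (hC₁ : C₁ ∈ AffineSubspace.perpBisector A B) (hC₁p : ∃ t : ℝ, K -ᵥ C₁ = t • (A -ᵥ B))
    (hO1 : dist O A = dist O B) (hO2 : dist O B = dist O C)
    (hKO : K ≠ O) :
    ∠ B₁ A₁ C₁ = ∠ B A C ∧ ∠ A₁ B₁ C₁ = ∠ A B C ∧ ∠ A₁ C₁ B₁ = ∠ A C B := by
  have hsim := similar_of_mem_perpBisector_of_vsub_eq_smul finrank_euclideanSpace_fin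
    (affineIndependent_iff_not_collinear_set.mp hABC) hO1 hO2 hA₁ hA₁p hB₁ hB₁p hC₁ hC₁p hKO
  obtain ⟨hB, hC, hA⟩ := hsim.angle_eq_all
  exact ⟨by rw [angle_comm, hA, angle_comm], hB, by rw [angle_comm, hC, angle_comm]⟩

/-- The first Brocard triangle `A₁B₁C₁` of a (non-equilateral, i.e. `K ≠ O`) triangle
`ABC` is similar to `ABC`: corresponding interior angles are equal. -/
theorem stmt_11 (A B C O K A₁ B₁ C₁ : Pt)
    (hABC : AffineIndependent ℝ ![A, B, C])
    (hK : (dist B C) ^ 2 • (A -ᵥ K) + (dist C A) ^ 2 • (B -ᵥ K) + (dist A B) ^ 2 • (C -ᵥ K)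
          = (0 : Pt))
    (hA₁ : A₁ ∈ AffineSubspace.perpBisector B C) (hA₁p : ∃ t : ℝ, K -ᵥ A₁ = t • (B -ᵥ C))
    (hB₁ : B₁ ∈ AffineSubspace.perpBisector C A) (hB₁p : ∃ t : ℝ, K -ᵥ B₁ = t • (C -ᵥ A))
    (hC₁ : C₁ ∈ AffineSubspace.perpBisector A B) (hC₁p : ∃ t : ℝ, K -ᵥ C₁ = t • (A -ᵥ B))
    (hO1 : dist O A = dist O B) (hO2 : dist O B = dist O C)
    (hKO : K ≠ O) :
    ∠ B₁ A₁ C₁ = ∠ B A C ∧ ∠ A₁ B₁ C₁ = ∠ A B C ∧ ∠ A₁ C₁ B₁ = ∠ A C B :=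
  stmt_11_general A B C O K A₁ B₁ C₁ hABC hA₁ hA₁p hB₁ hB₁p hC₁ hC₁p hO1 hO2 hKO
end
end

section
/- The lines AA₁, BB₁, CC₁ joining the vertices of triangle ABC to the corresponding vertices of its first Brocard triangle A₁B₁C₁ are concurrent (at the third Brocard point); thus ABC and its first Brocard triangle are homological. -/
open EuclideanGeometry Real Affine
open scoped RealInnerProductSpace

noncomputable section

lemma brocard_aux (X Y Z K P : Pt) (t : ℝ) (hYZ : Y ≠ Z)
    (hK : ((dist Y Z) ^ 2 + (dist Z X) ^ 2 + (dist X Y) ^ 2) • K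
        = (dist Y Z) ^ 2 • X + (dist Z X) ^ 2 • Y + (dist X Y) ^ 2 • Z)
    (hP : K -ᵥ P = t • (Y -ᵥ Z))
    (hperp : P ∈ AffineSubspace.perpBisector Y Z) :
    ((dist Y Z) ^ 2 + (dist Z X) ^ 2 + (dist X Y) ^ 2) • P
      = (dist Y Z) ^ 2 • X + (dist X Y) ^ 2 • Y + (dist Z X) ^ 2 • Z := by
  set a2 : ℝ := dist Y Z ^ 2 with ha2
  set b2 : ℝ := dist Z X ^ 2 with hb2
  set c2 : ℝ := dist X Y ^ 2 with hc2
  have ea : a2 = ⟪Y, Y⟫ - 2 * ⟪Y, Z⟫ + ⟪Z, Z⟫ := by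
    rw [ha2, dist_eq_norm, ← real_inner_self_eq_norm_sq]
    simp only [inner_sub_left, inner_sub_right, real_inner_comm Z Y]
    ring
  have eb : b2 = ⟪Z, Z⟫ - 2 * ⟪X, Z⟫ + ⟪X, X⟫ := by
    rw [hb2, dist_eq_norm, ← real_inner_self_eq_norm_sq]
    simp only [inner_sub_left, inner_sub_right, real_inner_comm Z X]
    ring
  have ec : c2 = ⟪X, X⟫ - 2 * ⟪X, Y⟫ + ⟪Y, Y⟫ := by
    rw [hc2, dist_eq_norm, ← real_inner_self_eq_norm_sq]
    simp only [inner_sub_left, inner_sub_right, real_inner_comm Y X]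
    ring
  have hPe : P = K - t • (Y - Z) := by
    have h := hP
    simp only [vsub_eq_sub] at h
    rw [← h]; abel
  have hM : (midpoint ℝ Y Z : Pt) = (2⁻¹ : ℝ) • (Y + Z) := by
    rw [midpoint_eq_smul_add, invOf_eq_inv]
  have h2 : ⟪P -ᵥ midpoint ℝ Y Z, Z -ᵥ Y⟫ = 0 :=
    (AffineSubspace.mem_perpBisector_iff_inner_eq_zero).mp hperp
  have hv : ((a2 + b2 + c2) : ℝ) • (P -ᵥ midpoint ℝ Y Z)
      = a2 • X + b2 • Y + c2 • Z - ((a2 + b2 + c2) * t) • (Y - Z)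
        - ((a2 + b2 + c2) * 2⁻¹) • (Y + Z) := by
    rw [vsub_eq_sub, hPe, hM]
    linear_combination (norm := module) hK
  have h5 : ⟪a2 • X + b2 • Y + c2 • Z - ((a2 + b2 + c2) * t) • (Y - Z)
        - ((a2 + b2 + c2) * 2⁻¹) • (Y + Z), Z - Y⟫ = (0 : ℝ) := by
    rw [← hv, vsub_eq_sub, real_inner_smul_left, vsub_eq_sub] at *
    rw [h2, mul_zero]
  simp only [inner_sub_left, inner_add_left, real_inner_smul_left, inner_sub_right,
    inner_add_right, real_inner_comm Z Y, real_inner_comm Z X, real_inner_comm Y X] at h5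
  have ha2ne : a2 ≠ 0 := by
    rw [ha2]
    exact pow_ne_zero 2 (dist_ne_zero.mpr hYZ)
  have h3 : a2 * ((a2 + b2 + c2) * t) = a2 * (b2 - c2) := by
    rw [ea, eb, ec] at h5 ⊢
    simp only [real_inner_comm Y X, real_inner_comm Z X, real_inner_comm Z Y] at h5 ⊢
    linear_combination h5
  have hst : (a2 + b2 + c2) * t = b2 - c2 := mul_left_cancel₀ ha2ne h3
  rw [hPe, smul_sub, hK, smul_smul, hst]
  module


set_option maxHeartbeats 1000000

/-- The lines `AA₁, BB₁, CC₁` joining the vertices of triangle `ABC` to the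
corresponding vertices of its first Brocard triangle are concurrent
(at the third Brocard point): the two triangles are homological. -/
theorem stmt_13 (A B C K A₁ B₁ C₁ : Pt)
    (hABC : AffineIndependent ℝ ![A, B, C])
    (hK : (dist B C) ^ 2 • (A -ᵥ K) + (dist C A) ^ 2 • (B -ᵥ K) + (dist A B) ^ 2 • (C -ᵥ K)
          = (0 : Pt))
    (hA₁ : A₁ ∈ AffineSubspace.perpBisector B C) (hA₁p : ∃ t : ℝ, K -ᵥ A₁ = t • (B -ᵥ C))
    (hB₁ : B₁ ∈ AffineSubspace.perpBisector C A) (hB₁p : ∃ t : ℝ, K -ᵥ B₁ = t • (C -ᵥ A))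
    (hC₁ : C₁ ∈ AffineSubspace.perpBisector A B) (hC₁p : ∃ t : ℝ, K -ᵥ C₁ = t • (A -ᵥ B)) :
    ∃ P : Pt, P ∈ line[ℝ, A, A₁] ∧ P ∈ line[ℝ, B, B₁] ∧ P ∈ line[ℝ, C, C₁] := by
  obtain ⟨tA, htA⟩ := hA₁p
  obtain ⟨tB, htB⟩ := hB₁p
  obtain ⟨tC, htC⟩ := hC₁p
  have hinj := hABC.injective
  have hAB : A ≠ B := by
    intro h
    exact (by decide : (0 : Fin 3) ≠ 1) (hinj (show ![A,B,C] 0 = ![A,B,C] 1 by simp [h]))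
  have hBC : B ≠ C := by
    intro h
    exact (by decide : (1 : Fin 3) ≠ 2) (hinj (show ![A,B,C] 1 = ![A,B,C] 2 by simp [h]))
  have hCA : C ≠ A := by
    intro h
    exact (by decide : (2 : Fin 3) ≠ 0) (hinj (show ![A,B,C] 2 = ![A,B,C] 0 by simp [h]))
  have hKs : ((dist B C) ^ 2 + (dist C A) ^ 2 + (dist A B) ^ 2) • K
      = (dist B C) ^ 2 • A + (dist C A) ^ 2 • B + (dist A B) ^ 2 • C := by
    have h := hK
    simp only [vsub_eq_sub] at h
    linear_combination (norm := module) -h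
  have e1 := brocard_aux A B C K A₁ tA hBC hKs htA hA₁
  have hK2 : ((dist C A) ^ 2 + (dist A B) ^ 2 + (dist B C) ^ 2) • K
      = (dist C A) ^ 2 • B + (dist A B) ^ 2 • C + (dist B C) ^ 2 • A := by
    linear_combination (norm := module) hKs
  have e2 := brocard_aux B C A K B₁ tB hCA hK2 htB hB₁
  have hK3 : ((dist A B) ^ 2 + (dist B C) ^ 2 + (dist C A) ^ 2) • K
      = (dist A B) ^ 2 • C + (dist B C) ^ 2 • A + (dist C A) ^ 2 • B := by
    linear_combination (norm := module) hKs
  have e3 := brocard_aux C A B K C₁ tC hAB hK3 htC hC₁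
  set a2 : ℝ := dist B C ^ 2 with ha2d
  set b2 : ℝ := dist C A ^ 2 with hb2d
  set c2 : ℝ := dist A B ^ 2 with hc2d
  have ha2 : 0 < a2 := by rw [ha2d]; exact pow_pos (dist_pos.mpr hBC) 2
  have hb2 : 0 < b2 := by rw [hb2d]; exact pow_pos (dist_pos.mpr hCA) 2
  have hc2 : 0 < c2 := by rw [hc2d]; exact pow_pos (dist_pos.mpr hAB) 2
  have hq : (b2 * c2 + c2 * a2 + a2 * b2) ≠ 0 := by positivity
  have hs1 : (a2 + b2 + c2) ≠ 0 := by positivity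
  have hs2 : (b2 + c2 + a2) ≠ 0 := by positivity
  have hs3 : (c2 + a2 + b2) ≠ 0 := by positivity
  have hA1e : A₁ = (a2 + b2 + c2)⁻¹ • (a2 • A + c2 • B + b2 • C) := by
    rw [← e1, smul_smul, inv_mul_cancel₀ hs1, one_smul]
  have hB1e : B₁ = (b2 + c2 + a2)⁻¹ • (b2 • B + a2 • C + c2 • A) := by
    rw [← e2, smul_smul, inv_mul_cancel₀ hs2, one_smul]
  have hC1e : C₁ = (c2 + a2 + b2)⁻¹ • (c2 • C + b2 • A + a2 • B) := by
    rw [← e3, smul_smul, inv_mul_cancel₀ hs3, one_smul]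
  refine ⟨(b2 * c2 + c2 * a2 + a2 * b2)⁻¹ •
      ((b2 * c2) • A + (c2 * a2) • B + (a2 * b2) • C), ?_, ?_, ?_⟩
  · have hP : (b2 * c2 + c2 * a2 + a2 * b2)⁻¹ •
        ((b2 * c2) • A + (c2 * a2) • B + (a2 * b2) • C)
        = AffineMap.lineMap A A₁
            (a2 * (a2 + b2 + c2) / (b2 * c2 + c2 * a2 + a2 * b2)) := by
      rw [hA1e]
      simp only [AffineMap.lineMap_apply, vsub_eq_sub, vadd_eq_add]
      match_scalars <;> field_simp <;> ring
    rw [hP]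
    exact AffineMap.lineMap_mem_affineSpan_pair _ _ _
  · have hP : (b2 * c2 + c2 * a2 + a2 * b2)⁻¹ •
        ((b2 * c2) • A + (c2 * a2) • B + (a2 * b2) • C)
        = AffineMap.lineMap B B₁
            (b2 * (b2 + c2 + a2) / (b2 * c2 + c2 * a2 + a2 * b2)) := by
      rw [hB1e]
      simp only [AffineMap.lineMap_apply, vsub_eq_sub, vadd_eq_add]
      match_scalars <;> field_simp <;> ring
    rw [hP]
    exact AffineMap.lineMap_mem_affineSpan_pair _ _ _
  · have hP : (b2 * c2 + c2 * a2 + a2 * b2)⁻¹ •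
        ((b2 * c2) • A + (c2 * a2) • B + (a2 * b2) • C)
        = AffineMap.lineMap C C₁
            (c2 * (c2 + a2 + b2) / (b2 * c2 + c2 * a2 + a2 * b2)) := by
      rw [hC1e]
      simp only [AffineMap.lineMap_apply, vsub_eq_sub, vadd_eq_add]
      match_scalars <;> field_simp <;> ring
    rw [hP]
    exact AffineMap.lineMap_mem_affineSpan_pair _ _ _
end
end

section
/- The perpendiculars from A, B, C of a triangle ABC onto the sides B₁C₁, C₁A₁, A₁B₁ of its first Brocard triangle are concurrent at a point T (the Tarry point), and T lies on the circumscribed circle of triangle ABC. -/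
open EuclideanGeometry Real Affine
open scoped RealInnerProductSpace

noncomputable section

/-! Put `O` at the origin of `ℂ`, so that `a, b, c` lie on the circle `‖z‖ = R`. The projection of
`k` onto the perpendicular bisector of the chord `bc` is the midpoint of `k` and its mirror image
`b c k̄ / R²`, hence `b₁ - c₁ = a (c - b) w` with `w = k̄ / (2R²)`, and cyclically. A chord from `a`
to a point `τ` of the circle is perpendicular to `a (c - b) w` as soon as `τ R² w̄ = -a b c w`;
this condition is symmetric in `a, b, c`, so `τ = -a b c w / (R² w̄)` serves all three vertices. -/

open ComplexConjugate

namespace Complex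

variable {R : ℝ} {a b c k p τ w d : ℂ}

lemma mul_conj_of_norm_eq (ha : ‖a‖ = R) : a * conj a = (R : ℂ) ^ 2 := by
  rw [mul_conj', ha]

lemma proj_perpBisector_chord (hb : ‖b‖ = R) (hc : ‖c‖ = R) (hbc : b ≠ c)
    (hp : ‖p - b‖ = ‖p - c‖) (hkp : ∃ t : ℝ, k - p = t * (b - c)) :
    2 * R ^ 2 * p = R ^ 2 * k + b * c * conj k := by
  obtain ⟨t, ht⟩ := hkp
  have hb' := mul_conj_of_norm_eq hb
  have hc' := mul_conj_of_norm_eq hc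
  have hpbc : (p - b) * conj (p - b) = (p - c) * conj (p - c) := by
    rw [mul_conj', mul_conj', hp]
  have hpc : R ^ 2 * p = b * c * conj p := by
    refine mul_left_cancel₀ (sub_ne_zero.mpr hbc) ?_
    simp only [map_sub] at hpbc
    linear_combination b * c * hpbc + (c * p - b * c) * hb' - (b * p - b * c) * hc'
  have hkc : conj k - conj p = t * (conj b - conj c) := by
    simpa using congrArg conj ht
  linear_combination hpc - b * c * hkc - t * c * hb' + t * b * hc' - R ^ 2 * ht

lemma inner_chord_eq_zero (ha : ‖a‖ = R) (hτ : ‖τ‖ = R) (hR : R ≠ 0)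
    (hd : R ^ 2 * d = a * τ * conj d) : inner ℝ (τ - a) d = 0 := by
  have ha0 : a ≠ 0 := norm_ne_zero_iff.mp (ha ▸ hR)
  have hτ0 : τ ≠ 0 := norm_ne_zero_iff.mp (hτ ▸ hR)
  have ha' := mul_conj_of_norm_eq ha
  have hτ' := mul_conj_of_norm_eq hτ
  -- with `z = d * conj (τ - a)`: `a τ (z + conj z) = (τ - a) (a τ conj d - R² d)`
  have hz : d * conj (τ - a) + conj (d * conj (τ - a)) = 0 := by
    refine mul_left_cancel₀ (mul_ne_zero ha0 hτ0) ?_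
    simp only [map_mul, map_sub, conj_conj]
    linear_combination (a * d) * hτ' - (τ * d) * ha' - (τ - a) * hd
  have h2 : (2 * (d * conj (τ - a)).re : ℝ) = 0 := by exact_mod_cast (add_conj _).symm.trans hz
  rw [Complex.inner]
  linarith

lemma inner_sub_mul_sub_mul_eq_zero (ha : ‖a‖ = R) (hb : ‖b‖ = R) (hc : ‖c‖ = R)
    (hτ : ‖τ‖ = R) (hR : R ≠ 0) (hτw : τ * (R ^ 2 * conj w) = -(a * b * c * w)) :
    inner ℝ (τ - a) (a * (c - b) * w) = 0 := by
  refine inner_chord_eq_zero ha hτ hR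
    (mul_left_cancel₀ (pow_ne_zero 2 (ofReal_ne_zero.mpr hR)) ?_)
  have ha' := mul_conj_of_norm_eq ha
  have hb' := mul_conj_of_norm_eq hb
  have hc' := mul_conj_of_norm_eq hc
  simp only [map_mul, map_sub]
  linear_combination (-R ^ 2 * τ * (conj c - conj b) * conj w) * ha'
    - R ^ 2 * (conj c - conj b) * hτw + R ^ 2 * a * b * w * hc' - R ^ 2 * a * c * w * hb'

lemma exists_norm_eq_inner_eq_zero (ha : ‖a‖ = R) (hb : ‖b‖ = R) (hc : ‖c‖ = R) (hR : R ≠ 0)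
    (w : ℂ) : ∃ τ : ℂ, ‖τ‖ = R ∧ inner ℝ (τ - a) (a * (c - b) * w) = 0 ∧
      inner ℝ (τ - b) (b * (a - c) * w) = 0 ∧ inner ℝ (τ - c) (c * (b - a) * w) = 0 := by
  rcases eq_or_ne w 0 with rfl | hw
  · exact ⟨a, ha, by simp, by simp, by simp⟩
  set τ := -(a * b * c * w) / (R ^ 2 * conj w)
  have hτw : τ * (R ^ 2 * conj w) = -(a * b * c * w) :=
    div_mul_cancel₀ _ (by simp [hR, hw])
  have hτ : ‖τ‖ = R := by
    have hR0 : 0 ≤ R := ha ▸ norm_nonneg a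
    simp only [τ, norm_div, norm_neg, norm_mul, norm_pow, norm_real, norm_conj, ha, hb, hc,
      Real.norm_eq_abs, abs_of_nonneg hR0]
    field_simp [norm_ne_zero_iff.mpr hw]
  exact ⟨τ, hτ, inner_sub_mul_sub_mul_eq_zero ha hb hc hτ hR hτw,
    inner_sub_mul_sub_mul_eq_zero hb hc ha hτ hR (by rw [hτw]; ring),
    inner_sub_mul_sub_mul_eq_zero hc ha hb hτ hR (by rw [hτw]; ring)⟩

theorem exists_tarry_point {a₁ b₁ c₁ : ℂ} (ha : ‖a‖ = R) (hb : ‖b‖ = R) (hc : ‖c‖ = R)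
    (hab : a ≠ b) (hbc : b ≠ c) (hca : c ≠ a)
    (ha₁ : ‖a₁ - b‖ = ‖a₁ - c‖) (ha₁k : ∃ t : ℝ, k - a₁ = t * (b - c))
    (hb₁ : ‖b₁ - c‖ = ‖b₁ - a‖) (hb₁k : ∃ t : ℝ, k - b₁ = t * (c - a))
    (hc₁ : ‖c₁ - a‖ = ‖c₁ - b‖) (hc₁k : ∃ t : ℝ, k - c₁ = t * (a - b)) :
    ∃ τ : ℂ, ‖τ‖ = R ∧ inner ℝ (τ - a) (b₁ - c₁) = 0 ∧ inner ℝ (τ - b) (c₁ - a₁) = 0 ∧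
      inner ℝ (τ - c) (a₁ - b₁) = 0 := by
  have hR : R ≠ 0 := by
    rintro rfl
    exact hab (by rw [norm_eq_zero.mp ha, norm_eq_zero.mp hb])
  have hR' : (R : ℂ) ≠ 0 := ofReal_ne_zero.mpr hR
  have hA := proj_perpBisector_chord hb hc hbc ha₁ ha₁k
  have hB := proj_perpBisector_chord hc ha hca hb₁ hb₁k
  have hC := proj_perpBisector_chord ha hb hab hc₁ hc₁k
  obtain ⟨τ, hτ, h₁, h₂, h₃⟩ := exists_norm_eq_inner_eq_zero ha hb hc hR (conj k / (2 * R ^ 2))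
  refine ⟨τ, hτ, ?_, ?_, ?_⟩
  · rwa [show b₁ - c₁ = a * (c - b) * (conj k / (2 * R ^ 2)) by
      field_simp; linear_combination hB - hC]
  · rwa [show c₁ - a₁ = b * (a - c) * (conj k / (2 * R ^ 2)) by
      field_simp; linear_combination hC - hA]
  · rwa [show a₁ - b₁ = c * (b - a) * (conj k / (2 * R ^ 2)) by
      field_simp; linear_combination hA - hB]

end Complex

theorem stmt_15_general (A B C O K A₁ B₁ C₁ : Pt)
    (hABC : AffineIndependent ℝ ![A, B, C])
    (hA₁ : A₁ ∈ AffineSubspace.perpBisector B C) (hA₁p : ∃ t : ℝ, K -ᵥ A₁ = t • (B -ᵥ C))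
    (hB₁ : B₁ ∈ AffineSubspace.perpBisector C A) (hB₁p : ∃ t : ℝ, K -ᵥ B₁ = t • (C -ᵥ A))
    (hC₁ : C₁ ∈ AffineSubspace.perpBisector A B) (hC₁p : ∃ t : ℝ, K -ᵥ C₁ = t • (A -ᵥ B))
    (hO1 : dist O A = dist O B) (hO2 : dist O B = dist O C) :
    ∃ T : Pt, inner ℝ (T -ᵥ A) (B₁ -ᵥ C₁) = (0 : ℝ) ∧
      inner ℝ (T -ᵥ B) (C₁ -ᵥ A₁) = (0 : ℝ) ∧
      inner ℝ (T -ᵥ C) (A₁ -ᵥ B₁) = (0 : ℝ) ∧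
      dist O T = dist O A := by
  let f : Pt ≃ₗᵢ[ℝ] ℂ := Complex.orthonormalBasisOneI.repr.symm
  let φ : Pt → ℂ := fun X => f (X - O)
  have hφ (X Y : Pt) : φ X - φ Y = f (X -ᵥ Y) := by simp [φ, ← map_sub]
  have hnorm (X : Pt) : ‖φ X‖ = dist O X := by rw [f.norm_map, ← dist_eq_norm, dist_comm]
  have hinner (X Y Z W : Pt) : inner ℝ (X -ᵥ Y) (Z -ᵥ W) = inner ℝ (φ X - φ Y) (φ Z - φ W) := by
    rw [hφ, hφ, f.inner_map_map]
  have hperp {X Y Z : Pt} (h : X ∈ AffineSubspace.perpBisector Y Z) :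
      ‖φ X - φ Y‖ = ‖φ X - φ Z‖ := by
    rw [hφ, hφ, f.norm_map, f.norm_map, ← dist_eq_norm_vsub, ← dist_eq_norm_vsub]
    exact AffineSubspace.mem_perpBisector_iff_dist_eq.mp h
  have hpar {X Y Z : Pt} (h : ∃ t : ℝ, K -ᵥ X = t • (Y -ᵥ Z)) :
      ∃ t : ℝ, φ K - φ X = t * (φ Y - φ Z) := by
    obtain ⟨t, ht⟩ := h
    exact ⟨t, by rw [hφ, hφ, ht, map_smul, Complex.real_smul]⟩
  have hne {i j : Fin 3} (hij : i ≠ j) : φ (![A, B, C] i) ≠ φ (![A, B, C] j) := fun h =>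
    hABC.injective.ne hij (by simpa [φ] using h)
  obtain ⟨τ, hτ, h₁, h₂, h₃⟩ := Complex.exists_tarry_point (k := φ K) (hnorm A)
    ((hnorm B).trans hO1.symm) ((hnorm C).trans (hO1.trans hO2).symm)
    (hne (i := 0) (j := 1) (by decide)) (hne (i := 1) (j := 2) (by decide))
    (hne (i := 2) (j := 0) (by decide))
    (hperp hA₁) (hpar hA₁p) (hperp hB₁) (hpar hB₁p) (hperp hC₁) (hpar hC₁p)
  have hφT : φ (O + f.symm τ) = τ := by simp [φ]
  refine ⟨O + f.symm τ, ?_, ?_, ?_, ?_⟩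
  · rwa [hinner, hφT]
  · rwa [hinner, hφT]
  · rwa [hinner, hφT]
  · rw [← hnorm, hφT, hτ]

/-- The perpendiculars from `A, B, C` to the sides `B₁C₁, C₁A₁, A₁B₁` of the first
Brocard triangle are concurrent at a point `T` (the Tarry point), and `T` lies on the
circumcircle of `ABC`. -/
theorem stmt_15 (A B C O K A₁ B₁ C₁ : Pt)
    (hABC : AffineIndependent ℝ ![A, B, C])
    (hK : (dist B C) ^ 2 • (A -ᵥ K) + (dist C A) ^ 2 • (B -ᵥ K) + (dist A B) ^ 2 • (C -ᵥ K)
          = (0 : Pt))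
    (hA₁ : A₁ ∈ AffineSubspace.perpBisector B C) (hA₁p : ∃ t : ℝ, K -ᵥ A₁ = t • (B -ᵥ C))
    (hB₁ : B₁ ∈ AffineSubspace.perpBisector C A) (hB₁p : ∃ t : ℝ, K -ᵥ B₁ = t • (C -ᵥ A))
    (hC₁ : C₁ ∈ AffineSubspace.perpBisector A B) (hC₁p : ∃ t : ℝ, K -ᵥ C₁ = t • (A -ᵥ B))
    (hO1 : dist O A = dist O B) (hO2 : dist O B = dist O C) :
    ∃ T : Pt, inner ℝ (T -ᵥ A) (B₁ -ᵥ C₁) = (0 : ℝ) ∧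
      inner ℝ (T -ᵥ B) (C₁ -ᵥ A₁) = (0 : ℝ) ∧
      inner ℝ (T -ᵥ C) (A₁ -ᵥ B₁) = (0 : ℝ) ∧
      dist O T = dist O A :=
  stmt_15_general A B C O K A₁ B₁ C₁ hABC hA₁ hA₁p hB₁ hB₁p hC₁ hC₁p hO1 hO2
end
end

section
/- The parallels through the vertices A, B, C of a triangle to the corresponding sides B₁C₁, C₁A₁, A₁B₁ of its first Brocard triangle are concurrent at a point S (the Steiner point), and S lies on the circumscribed circle of triangle ABC. -/
open EuclideanGeometry Real Affine
open scoped RealInnerProductSpace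

noncomputable section

/-!
Put the circumcentre at `0 ∈ ℂ`, so that `A, B, C` become `a, b, c` with `‖a‖ = ‖b‖ = ‖c‖ = R`,
and let `k` be the image of `K`. The reflection in the perpendicular bisector of the chord `bc`
is `z ↦ b c z̄ / R²`, so the projection of `k` onto it is `a₁ = (k + k̄ b c / R²) / 2`, and
similarly for `b₁, c₁`. Hence `b₁ - c₁ = k̄ a (c - b) / (2R²)`. The point `s = k̄ a b c / (k R²)`
has modulus `R`, and `s - a = a (k̄ b c - k R²) / (k R²)`: its ratio to `b₁ - c₁` is invariant
under conjugation (use `ā = R² / a`, …), hence real.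
-/

theorem AffineEquiv.exists_map_vsub_eq_smul_map_vsub_iff {k V₁ V₂ P₁ P₂ : Type*} [Ring k]
    [AddCommGroup V₁] [Module k V₁] [AddTorsor V₁ P₁]
    [AddCommGroup V₂] [Module k V₂] [AddTorsor V₂ P₂] (f : P₁ ≃ᵃ[k] P₂) (w x y z : P₁) :
    (∃ t : k, f w -ᵥ f x = t • (f y -ᵥ f z)) ↔ ∃ t : k, w -ᵥ x = t • (y -ᵥ z) := by
  have hf : ∀ p q : P₁, f p -ᵥ f q = f.linear (p -ᵥ q) := fun p q =>
    ((f : P₁ →ᵃ[k] P₂).linearMap_vsub p q).symm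
  simp only [hf, ← map_smul, f.linear.injective.eq_iff]

namespace Complex

open ComplexConjugate

lemma conj_eq_sq_div_of_norm_eq {z : ℂ} {R : ℝ} (hz : ‖z‖ = R) (hz0 : z ≠ 0) :
    conj z = (R : ℂ) ^ 2 / z := by
  rw [eq_div_iff hz0, mul_comm, mul_conj', hz]

lemma exists_real_smul_eq_of_mul_conj_eq {z w : ℂ} (hw : w ≠ 0)
    (h : z * conj w = conj z * w) : ∃ t : ℝ, z = t • w := by
  have hw' : conj w ≠ 0 := (map_ne_zero _).mpr hw
  have hreal : conj (z / w) = z / w := by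
    rw [map_div₀, div_eq_div_iff hw' hw, h]
  refine ⟨(z / w).re, ?_⟩
  rw [real_smul, conj_eq_iff_re.mp hreal, div_mul_cancel₀ _ hw]

lemma two_mul_eq_of_mem_perpBisector {R : ℝ} {b c k x : ℂ} (hb : ‖b‖ = R) (hc : ‖c‖ = R)
    (hbc : b ≠ c) (hx : x ∈ AffineSubspace.perpBisector b c)
    (hkx : ∃ t : ℝ, k -ᵥ x = t • (b -ᵥ c)) :
    2 * (R : ℂ) ^ 2 * x = (R : ℂ) ^ 2 * k + conj k * b * c := by
  obtain ⟨t, ht⟩ := hkx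
  rw [vsub_eq_sub, vsub_eq_sub, real_smul] at ht
  have ht' : conj k - conj x = t * (conj b - conj c) := by
    simpa only [map_sub, map_mul, conj_ofReal] using congrArg conj ht
  have hxbc : (x - b) * (conj x - conj b) = (x - c) * (conj x - conj c) := by
    rw [AffineSubspace.mem_perpBisector_iff_dist_eq, dist_eq, dist_eq] at hx
    rw [← map_sub, ← map_sub, mul_conj', mul_conj', hx]
  have hbb : b * conj b = (R : ℂ) ^ 2 := by rw [mul_conj', hb]
  have hcc : c * conj c = (R : ℂ) ^ 2 := by rw [mul_conj', hc]
  refine mul_right_cancel₀ (sub_ne_zero.mpr hbc.symm) ?_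
  linear_combination (-(b * c * (conj b - conj c))) * ht
      + (b * c * (b - c)) * ht' + (-(b * c)) * hxbc
      + (b * c - (2 * x - k) * c) * hbb + (-(b * c) + (2 * x - k) * b) * hcc

def steinerPoint (R : ℝ) (a b c k : ℂ) : ℂ :=
  conj k * a * b * c / (k * (R : ℂ) ^ 2)

lemma steinerPoint_rotate (R : ℝ) (a b c k : ℂ) :
    steinerPoint R b c a k = steinerPoint R a b c k := by
  unfold steinerPoint
  ring

lemma norm_steinerPoint {R : ℝ} {a b c k : ℂ} (hR : R ≠ 0)
    (ha : ‖a‖ = R) (hb : ‖b‖ = R) (hc : ‖c‖ = R) (hk : k ≠ 0) :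
    ‖steinerPoint R a b c k‖ = R := by
  have hk' : ‖k‖ ≠ 0 := norm_ne_zero_iff.mpr hk
  rw [steinerPoint, norm_div, norm_mul, norm_mul, norm_mul, norm_mul, norm_conj, ha, hb, hc,
    norm_pow, norm_real, Real.norm_eq_abs, sq_abs]
  field_simp

lemma exists_steinerPoint_sub_eq_smul {R : ℝ} {a b c k b₁ c₁ : ℂ} (hR : R ≠ 0)
    (ha : ‖a‖ = R) (hb : ‖b‖ = R) (hc : ‖c‖ = R) (hbc : b ≠ c) (hk : k ≠ 0)
    (hb₁ : 2 * (R : ℂ) ^ 2 * b₁ = (R : ℂ) ^ 2 * k + conj k * c * a)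
    (hc₁ : 2 * (R : ℂ) ^ 2 * c₁ = (R : ℂ) ^ 2 * k + conj k * a * b) :
    ∃ t : ℝ, steinerPoint R a b c k - a = t • (b₁ - c₁) := by
  have hR' : (R : ℂ) ≠ 0 := ofReal_ne_zero.mpr hR
  have hne : ∀ {z : ℂ}, ‖z‖ = R → z ≠ 0 := fun hz h => hR (by rw [← hz, h, norm_zero])
  have ha0 := hne ha
  have hb0 := hne hb
  have hc0 := hne hc
  have hk' : conj k ≠ 0 := (map_ne_zero _).mpr hk
  have hw : b₁ - c₁ = conj k * a * (c - b) / (2 * (R : ℂ) ^ 2) := by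
    field_simp
    linear_combination hb₁ - hc₁
  have hw0 : b₁ - c₁ ≠ 0 := by
    rw [hw]
    exact div_ne_zero (mul_ne_zero (mul_ne_zero hk' ha0) (sub_ne_zero.mpr hbc.symm))
      (mul_ne_zero two_ne_zero (pow_ne_zero 2 hR'))
  refine exists_real_smul_eq_of_mul_conj_eq hw0 ?_
  rw [hw, steinerPoint]
  simp only [map_div₀, map_mul, map_sub, map_pow, map_ofNat, conj_conj, conj_ofReal,
    conj_eq_sq_div_of_norm_eq ha ha0, conj_eq_sq_div_of_norm_eq hb hb0,
    conj_eq_sq_div_of_norm_eq hc hc0]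
  field_simp
  ring

theorem exists_steinerPoint {R : ℝ} {a b c k a₁ b₁ c₁ : ℂ}
    (ha : ‖a‖ = R) (hb : ‖b‖ = R) (hc : ‖c‖ = R) (hab : a ≠ b) (hbc : b ≠ c) (hca : c ≠ a)
    (hk : k ≠ 0)
    (ha₁ : a₁ ∈ AffineSubspace.perpBisector b c) (ha₁k : ∃ t : ℝ, k -ᵥ a₁ = t • (b -ᵥ c))
    (hb₁ : b₁ ∈ AffineSubspace.perpBisector c a) (hb₁k : ∃ t : ℝ, k -ᵥ b₁ = t • (c -ᵥ a))
    (hc₁ : c₁ ∈ AffineSubspace.perpBisector a b) (hc₁k : ∃ t : ℝ, k -ᵥ c₁ = t • (a -ᵥ b)) :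
    ∃ s : ℂ, (∃ t : ℝ, s -ᵥ a = t • (b₁ -ᵥ c₁)) ∧ (∃ t : ℝ, s -ᵥ b = t • (c₁ -ᵥ a₁)) ∧
      (∃ t : ℝ, s -ᵥ c = t • (a₁ -ᵥ b₁)) ∧ ‖s‖ = R := by
  have hR : R ≠ 0 := by
    rintro rfl
    exact hab (by rw [norm_eq_zero.mp ha, norm_eq_zero.mp hb])
  have ea := two_mul_eq_of_mem_perpBisector hb hc hbc ha₁ ha₁k
  have eb := two_mul_eq_of_mem_perpBisector hc ha hca hb₁ hb₁k
  have ec := two_mul_eq_of_mem_perpBisector ha hb hab hc₁ hc₁k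
  refine ⟨steinerPoint R a b c k, ?_, ?_, ?_, norm_steinerPoint hR ha hb hc hk⟩
  · exact exists_steinerPoint_sub_eq_smul hR ha hb hc hbc hk eb ec
  · rw [← steinerPoint_rotate]
    exact exists_steinerPoint_sub_eq_smul hR hb hc ha hca hk ec ea
  · rw [← steinerPoint_rotate, ← steinerPoint_rotate]
    exact exists_steinerPoint_sub_eq_smul hR hc ha hb hab hk ea eb

end Complex

theorem stmt_16_general (A B C O K A₁ B₁ C₁ : Pt)
    (hABC : AffineIndependent ℝ ![A, B, C])
    (hA₁ : A₁ ∈ AffineSubspace.perpBisector B C) (hA₁p : ∃ t : ℝ, K -ᵥ A₁ = t • (B -ᵥ C))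
    (hB₁ : B₁ ∈ AffineSubspace.perpBisector C A) (hB₁p : ∃ t : ℝ, K -ᵥ B₁ = t • (C -ᵥ A))
    (hC₁ : C₁ ∈ AffineSubspace.perpBisector A B) (hC₁p : ∃ t : ℝ, K -ᵥ C₁ = t • (A -ᵥ B))
    (hO1 : dist O A = dist O B) (hO2 : dist O B = dist O C)
    (hKO : K ≠ O) :
    ∃ S : Pt, (∃ t : ℝ, S -ᵥ A = t • (B₁ -ᵥ C₁)) ∧
      (∃ t : ℝ, S -ᵥ B = t • (C₁ -ᵥ A₁)) ∧
      (∃ t : ℝ, S -ᵥ C = t • (A₁ -ᵥ B₁)) ∧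
      dist O S = dist O A := by
  let e : Pt ≃ᵃⁱ[ℝ] ℂ := (AffineIsometryEquiv.vaddConst ℝ O).symm.trans
    Complex.orthonormalBasisOneI.repr.symm.toAffineIsometryEquiv
  have he : e O = 0 := by simp [e]
  have hnorm (X : Pt) : ‖e X‖ = dist O X := by rw [← e.dist_map, he, dist_zero_left]
  have hperp {X Y Z : Pt} (h : X ∈ AffineSubspace.perpBisector Y Z) :
      e X ∈ AffineSubspace.perpBisector (e Y) (e Z) := e.isometry.mapsTo_perpBisector Y Z h
  have hpar := e.toAffineEquiv.exists_map_vsub_eq_smul_map_vsub_iff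
  have hAB : e A ≠ e B := e.injective.ne (hABC.injective.ne (show (0 : Fin 3) ≠ 1 by decide))
  have hBC : e B ≠ e C := e.injective.ne (hABC.injective.ne (show (1 : Fin 3) ≠ 2 by decide))
  have hCA : e C ≠ e A := e.injective.ne (hABC.injective.ne (show (2 : Fin 3) ≠ 0 by decide))
  obtain ⟨s, hsA, hsB, hsC, hs⟩ := Complex.exists_steinerPoint (hnorm A)
    (by rw [hnorm, ← hO1]) (by rw [hnorm, ← hO2, ← hO1]) hAB hBC hCA (he ▸ e.injective.ne hKO)
    (hperp hA₁) ((hpar ..).mpr hA₁p) (hperp hB₁) ((hpar ..).mpr hB₁p)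
    (hperp hC₁) ((hpar ..).mpr hC₁p)
  refine ⟨e.symm s, (hpar ..).mp ?_, (hpar ..).mp ?_, (hpar ..).mp ?_, ?_⟩
  · simpa only [AffineIsometryEquiv.coe_toAffineEquiv, e.apply_symm_apply] using hsA
  · simpa only [AffineIsometryEquiv.coe_toAffineEquiv, e.apply_symm_apply] using hsB
  · simpa only [AffineIsometryEquiv.coe_toAffineEquiv, e.apply_symm_apply] using hsC
  · rw [← hnorm, e.apply_symm_apply, hs]

/-- The parallels through `A, B, C` to the sides `B₁C₁, C₁A₁, A₁B₁` of the first
Brocard triangle of a non-equilateral triangle are concurrent at a point `S`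
(the Steiner point), which lies on the circumcircle of `ABC`. -/
theorem stmt_16 (A B C O K A₁ B₁ C₁ : Pt)
    (hABC : AffineIndependent ℝ ![A, B, C])
    (hK : (dist B C) ^ 2 • (A -ᵥ K) + (dist C A) ^ 2 • (B -ᵥ K) + (dist A B) ^ 2 • (C -ᵥ K)
          = (0 : Pt))
    (hA₁ : A₁ ∈ AffineSubspace.perpBisector B C) (hA₁p : ∃ t : ℝ, K -ᵥ A₁ = t • (B -ᵥ C))
    (hB₁ : B₁ ∈ AffineSubspace.perpBisector C A) (hB₁p : ∃ t : ℝ, K -ᵥ B₁ = t • (C -ᵥ A))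
    (hC₁ : C₁ ∈ AffineSubspace.perpBisector A B) (hC₁p : ∃ t : ℝ, K -ᵥ C₁ = t • (A -ᵥ B))
    (hO1 : dist O A = dist O B) (hO2 : dist O B = dist O C)
    (hKO : K ≠ O) :
    ∃ S : Pt, (∃ t : ℝ, S -ᵥ A = t • (B₁ -ᵥ C₁)) ∧
      (∃ t : ℝ, S -ᵥ B = t • (C₁ -ᵥ A₁)) ∧
      (∃ t : ℝ, S -ᵥ C = t • (A₁ -ᵥ B₁)) ∧
      dist O S = dist O A :=
  stmt_16_general A B C O K A₁ B₁ C₁ hABC hA₁ hA₁p hB₁ hB₁p hC₁ hC₁p hO1 hO2 hKO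
end
end

section
/- The Steiner point S and the Tarry point T of a triangle ABC are diametrically opposite on the circumscribed circle of ABC. -/
/-!
Each side of the first Brocard triangle is parallel to the line through the opposite vertex and
`S` and perpendicular to the line through that vertex and `T`, so every vertex of `ABC` sees the
segment `ST` at a right angle. By Thales, `A`, `B`, `C` lie on the circle with diameter `ST`;
the circle through three non-collinear points of the plane is unique, so this is the
circumcircle and its centre `O` is the midpoint of `ST`.
-/

open EuclideanGeometry Real Affine
open scoped RealInnerProductSpace

noncomputable section

namespace EuclideanGeometry

variable {V P : Type*} [NormedAddCommGroup V] [InnerProductSpace ℝ V] [MetricSpace P]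
  [NormedAddTorsor V P]

theorem mem_sphere_ofDiameter_of_inner_eq_zero {p₁ p₂ p : P} (h : ⟪p₁ -ᵥ p, p₂ -ᵥ p⟫ = 0) :
    p ∈ Sphere.ofDiameter p₁ p₂ :=
  Sphere.angle_eq_pi_div_two_iff_mem_sphere_ofDiameter.mp
    ((InnerProductGeometry.inner_eq_zero_iff_angle_eq_pi_div_two _ _).mp h)

theorem _root_.AffineIndependent.sphere_eq_of_range_subset [FiniteDimensional ℝ V]
    {ι : Type*} [Fintype ι] {p : ι → P} (ha : AffineIndependent ℝ p)
    (hcard : Fintype.card ι = Module.finrank ℝ V + 1) {s₁ s₂ : Sphere P}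
    (h₁ : Set.range p ⊆ s₁) (h₂ : Set.range p ⊆ s₂) : s₁ = s₂ := by
  have : Nonempty ι := Fintype.card_pos_iff.mp (by omega)
  have hspan : affineSpan ℝ (Set.range p) = ⊤ :=
    ha.affineSpan_eq_top_iff_card_eq_finrank_add_one.mpr hcard
  exact ha.existsUnique_dist_eq.unique ⟨hspan ▸ AffineSubspace.mem_top ℝ V _, h₁⟩
    ⟨hspan ▸ AffineSubspace.mem_top ℝ V _, h₂⟩

end EuclideanGeometry

theorem stmt_17_general (A B C O A₁ B₁ C₁ T S : Pt)
    (hABC : AffineIndependent ℝ ![A, B, C])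
    (hO1 : dist O A = dist O B) (hO2 : dist O B = dist O C)
    (hT1 : inner ℝ (T -ᵥ A) (B₁ -ᵥ C₁) = (0 : ℝ))
    (hT2 : inner ℝ (T -ᵥ B) (C₁ -ᵥ A₁) = (0 : ℝ))
    (hT3 : inner ℝ (T -ᵥ C) (A₁ -ᵥ B₁) = (0 : ℝ))
    (hS1 : ∃ t : ℝ, S -ᵥ A = t • (B₁ -ᵥ C₁))
    (hS2 : ∃ t : ℝ, S -ᵥ B = t • (C₁ -ᵥ A₁))
    (hS3 : ∃ t : ℝ, S -ᵥ C = t • (A₁ -ᵥ B₁)) :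
    O = midpoint ℝ S T := by
  have mem_ofDiameter : ∀ {X v : Pt}, ⟪T -ᵥ X, v⟫ = 0 → (∃ t : ℝ, S -ᵥ X = t • v) →
      X ∈ Sphere.ofDiameter S T := by
    rintro X v hTX ⟨t, hSX⟩
    refine mem_sphere_ofDiameter_of_inner_eq_zero ?_
    rw [hSX, inner_smul_left, real_inner_comm, hTX, mul_zero]
  have hrange : Set.range ![A, B, C] = {A, B, C} := by
    simp only [Matrix.range_cons, Matrix.range_empty, Set.union_empty, Set.singleton_union]
  have hcircum : Set.range ![A, B, C] ⊆ (⟨O, dist O A⟩ : Sphere Pt) := by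
    simp only [hrange, Set.insert_subset_iff, Set.singleton_subset_iff, Metric.mem_sphere']
    exact ⟨trivial, hO1.symm, (hO1.trans hO2).symm⟩
  have hdiam : Set.range ![A, B, C] ⊆ Sphere.ofDiameter S T := by
    simp only [hrange, Set.insert_subset_iff, Set.singleton_subset_iff]
    exact ⟨mem_ofDiameter hT1 hS1, mem_ofDiameter hT2 hS2, mem_ofDiameter hT3 hS3⟩
  exact congrArg Sphere.center
    (hABC.sphere_eq_of_range_subset (by simp [finrank_euclideanSpace]) hcircum hdiam)

/-- The Steiner point `S` and the Tarry point `T` of a (non-equilateral) triangle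
`ABC` are diametrically opposite on the circumcircle: `O` is the midpoint of `ST`. -/
theorem stmt_17 (A B C O K A₁ B₁ C₁ T S : Pt)
    (hABC : AffineIndependent ℝ ![A, B, C])
    (hK : (dist B C) ^ 2 • (A -ᵥ K) + (dist C A) ^ 2 • (B -ᵥ K) + (dist A B) ^ 2 • (C -ᵥ K)
          = (0 : Pt))
    (hA₁ : A₁ ∈ AffineSubspace.perpBisector B C) (hA₁p : ∃ t : ℝ, K -ᵥ A₁ = t • (B -ᵥ C))
    (hB₁ : B₁ ∈ AffineSubspace.perpBisector C A) (hB₁p : ∃ t : ℝ, K -ᵥ B₁ = t • (C -ᵥ A))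
    (hC₁ : C₁ ∈ AffineSubspace.perpBisector A B) (hC₁p : ∃ t : ℝ, K -ᵥ C₁ = t • (A -ᵥ B))
    (hO1 : dist O A = dist O B) (hO2 : dist O B = dist O C)
    (hKO : K ≠ O)
    (hT1 : inner ℝ (T -ᵥ A) (B₁ -ᵥ C₁) = (0 : ℝ))
    (hT2 : inner ℝ (T -ᵥ B) (C₁ -ᵥ A₁) = (0 : ℝ))
    (hT3 : inner ℝ (T -ᵥ C) (A₁ -ᵥ B₁) = (0 : ℝ))
    (hS1 : ∃ t : ℝ, S -ᵥ A = t • (B₁ -ᵥ C₁))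
    (hS2 : ∃ t : ℝ, S -ᵥ B = t • (C₁ -ᵥ A₁))
    (hS3 : ∃ t : ℝ, S -ᵥ C = t • (A₁ -ᵥ B₁)) :
    O = midpoint ℝ S T :=
  stmt_17_general A B C O A₁ B₁ C₁ T S hABC hO1 hO2 hT1 hT2 hT3 hS1 hS2 hS3
end
end
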